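/- Water-filling characterization of the optimal apparent profile: for every deferral rate φ with 0 ≤ φ ≤ φ_crit and φ < 1, there exist thresholds τ₁ ≤ τ₂ such that Σ_i max{τ₁ − q_i, 0} = Σ_i max{q_i − τ₂, 0} = φ, and the profile t* defined by t*_i = min{max{q_i, τ₁}, τ₂} is the unique maximizer of the Shannon entropy H over all apparent profiles attainable with rate φ; that is, the optimal strategies raise the lowest components of q to a common level τ₁, lower the highest components to a common level τ₂, and leave intermediate components unperturbed. -/

import Mathlib

/-!
STATEMENT 6. Water-filling characterization of the optimal apparent profile:
for every deferral rate `φ` with `0 ≤ φ ≤ φ_crit` and `φ < 1`, there exist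
thresholds `τ₁ ≤ τ₂` with `∑ max{τ₁ - qᵢ, 0} = ∑ max{qᵢ - τ₂, 0} = φ`, such that
the profile `t*ᵢ = min{max{qᵢ, τ₁}, τ₂}` is the unique maximizer of the Shannon
entropy over all apparent profiles attainable with rate `φ`.
-/

/-- Base-2 Shannon entropy `H(t) = -∑ tᵢ log₂ tᵢ` (with `0·log₂ 0 = 0`). -/
noncomputable def shannon {n : ℕ} (t : Fin n → ℝ) : ℝ :=
  -∑ i, t i * Real.logb 2 (t i)

/-- A pair `(s,r)` is feasible for actual profile `q` and deferral rate `φ`. -/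
def Feasible {n : ℕ} (q : Fin n → ℝ) (φ : ℝ) (s r : Fin n → ℝ) : Prop :=
  (∀ i, 0 ≤ s i) ∧ (∀ i, 0 ≤ r i) ∧ (∀ i, 0 ≤ q i - s i + r i) ∧
    (∑ i, s i = φ) ∧ (∑ i, r i = φ)

/-- `t` is an apparent profile attainable from `q` with deferral rate `φ`. -/
def Attainable {n : ℕ} (q : Fin n → ℝ) (φ : ℝ) (t : Fin n → ℝ) : Prop :=
  ∃ s r, Feasible q φ s r ∧ t = fun i => q i - s i + r i

/-- Total variation distance `TV(p‖q) = ½ ∑ |pᵢ - qᵢ|`. -/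
noncomputable def tvDist {n : ℕ} (p q : Fin n → ℝ) : ℝ :=
  (1 / 2) * ∑ i, |p i - q i|

/-!
The levels exist by the intermediate value theorem: `τ ↦ ∑ (τ - qᵢ)⁺` and `τ ↦ ∑ (qᵢ - τ)⁺`
are continuous, vanish at `0` and `1` respectively, and both equal `TV(u‖q)` at `τ = 1/n`.

For optimality let `y` be the clipped profile and `t = q - s + r` attainable. The tangent line
of `x log x` at `y i` gives `∑ tᵢ log tᵢ ≥ ∑ yᵢ log yᵢ + ∑ (tᵢ - yᵢ) log yᵢ`, strictly unless
`t = y`, because `∑ t = ∑ y`. Since `log yᵢ ∈ [log τ₁, log τ₂]`, the moves `r` and `s` contribute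
at least `φ log τ₁ - φ log τ₂` to `∑ (tᵢ - yᵢ) log yᵢ`, while `∑ (qᵢ - yᵢ) log yᵢ` is exactly
`φ (log τ₂ - log τ₁)`, since `y` lowers `q` to `τ₂` and raises it to `τ₁` by total mass `φ` each.
So that sum is nonnegative and `H(t) < H(y)`. For `φ = 0` the only attainable profile is `q`.
-/

open Finset Real

section RealSums

variable {ι : Type*} [Fintype ι]

lemma mul_log_add_tangent_lt {x y : ℝ} (hx : 0 ≤ x) (hy : 0 < y) (hxy : x ≠ y) :
    y * log y + (log y + 1) * (x - y) < x * log x := by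
  rcases hx.eq_or_lt with rfl | hx
  · simp only [zero_mul]; nlinarith
  · have h := log_lt_sub_one_of_pos (div_pos hy hx)
      (by rwa [ne_eq, div_eq_one_iff_eq hx.ne', eq_comm])
    rw [log_div hy.ne' hx.ne', lt_sub_iff_add_lt, lt_div_iff₀ hx] at h
    nlinarith

lemma sum_mul_log_lt_of_ne {x y : ι → ℝ} (hx : ∀ i, 0 ≤ x i) (hy : ∀ i, 0 < y i)
    (hsum : ∑ i, x i = ∑ i, y i) (hlog : 0 ≤ ∑ i, (x i - y i) * log (y i)) (hne : x ≠ y) :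
    ∑ i, y i * log (y i) < ∑ i, x i * log (x i) := by
  have hsplit : ∑ i, (y i * log (y i) + (log (y i) + 1) * (x i - y i)) =
      ∑ i, y i * log (y i) + ∑ i, (x i - y i) * log (y i) + (∑ i, x i - ∑ i, y i) := by
    rw [← sum_sub_distrib, ← sum_add_distrib, ← sum_add_distrib]
    exact sum_congr rfl fun i _ => by ring
  obtain ⟨j, hj⟩ := Function.ne_iff.mp hne
  calc ∑ i, y i * log (y i)
      ≤ ∑ i, (y i * log (y i) + (log (y i) + 1) * (x i - y i)) := by
        rw [hsplit, hsum]; linarith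
    _ < ∑ i, x i * log (x i) := by
        refine sum_lt_sum (fun i _ => ?_) ⟨j, mem_univ j, mul_log_add_tangent_lt (hx j) (hy j) hj⟩
        rcases eq_or_ne (x i) (y i) with h | h
        · simp [h]
        · exact (mul_log_add_tangent_lt (hx i) (hy i) h).le

lemma sum_max_zero_eq_half_sum_abs {x : ι → ℝ} (hx : ∑ i, x i = 0) :
    ∑ i, max (x i) 0 = 1 / 2 * ∑ i, |x i| := by
  have h : ∀ i, max (x i) 0 = (x i + |x i|) / 2 := fun i => by
    rcases le_total (x i) 0 with h | h
    · rw [max_eq_right h, abs_of_nonpos h]; ring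
    · rw [max_eq_left h, abs_of_nonneg h]; ring
  simp only [h, ← sum_div, sum_add_distrib, hx]
  ring

lemma exists_sum_max_sub_eq {q : ι → ℝ} {a b φ : ℝ} (hab : a ≤ b) (ha : ∀ i, a ≤ q i)
    (hφ : φ ∈ Set.Icc 0 (∑ i, max (b - q i) 0)) :
    ∃ τ ∈ Set.Icc a b, ∑ i, max (τ - q i) 0 = φ := by
  have hfa : ∑ i, max (a - q i) 0 = 0 := sum_eq_zero fun i _ => max_eq_right (sub_nonpos.2 (ha i))
  have hf : Continuous fun τ => ∑ i, max (τ - q i) 0 := by fun_prop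
  exact intermediate_value_Icc hab hf.continuousOn (by rwa [hfa])

lemma exists_sum_max_sub_eq' {q : ι → ℝ} {a b φ : ℝ} (hab : a ≤ b) (hb : ∀ i, q i ≤ b)
    (hφ : φ ∈ Set.Icc 0 (∑ i, max (q i - a) 0)) :
    ∃ τ ∈ Set.Icc a b, ∑ i, max (q i - τ) 0 = φ := by
  have hfb : ∑ i, max (q i - b) 0 = 0 := sum_eq_zero fun i _ => max_eq_right (sub_nonpos.2 (hb i))
  have hf : Continuous fun τ => ∑ i, max (q i - τ) 0 := by fun_prop
  exact intermediate_value_Icc' hab hf.continuousOn (by rwa [hfb])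

lemma sub_clip_mul {τ₁ τ₂ : ℝ} (hτ : τ₁ ≤ τ₂) (g : ℝ → ℝ) (c : ℝ) :
    (c - min (max c τ₁) τ₂) * g (min (max c τ₁) τ₂) =
      max (c - τ₂) 0 * g τ₂ - max (τ₁ - c) 0 * g τ₁ := by
  rcases le_total c τ₁ with h₁ | h₁
  · rw [max_eq_right h₁, min_eq_left hτ, max_eq_right (by linarith), max_eq_left (by linarith)]
    ring
  rcases le_total c τ₂ with h₂ | h₂
  · rw [max_eq_left h₁, min_eq_left h₂, max_eq_right (by linarith), max_eq_right (by linarith)]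
    ring
  · rw [max_eq_left h₁, min_eq_right h₂, max_eq_left (by linarith), max_eq_right (by linarith)]
    ring

lemma sum_sub_clip_mul {q : ι → ℝ} {τ₁ τ₂ φ : ℝ} (hτ : τ₁ ≤ τ₂)
    (hg : ∑ i, max (τ₁ - q i) 0 = φ) (hh : ∑ i, max (q i - τ₂) 0 = φ) (g : ℝ → ℝ) :
    ∑ i, (q i - min (max (q i) τ₁) τ₂) * g (min (max (q i) τ₁) τ₂) = φ * (g τ₂ - g τ₁) := by
  simp only [sub_clip_mul hτ, sum_sub_distrib, ← sum_mul, hg, hh]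
  ring

lemma sum_clip {q : ι → ℝ} {τ₁ τ₂ φ : ℝ} (hτ : τ₁ ≤ τ₂)
    (hg : ∑ i, max (τ₁ - q i) 0 = φ) (hh : ∑ i, max (q i - τ₂) 0 = φ) :
    ∑ i, min (max (q i) τ₁) τ₂ = ∑ i, q i := by
  have h := sum_sub_clip_mul hτ hg hh fun _ => 1
  simp only [mul_one, sub_self, mul_zero, sum_sub_distrib] at h
  linarith

end RealSums

section Profiles

variable {n : ℕ}

lemma shannon_eq (t : Fin n → ℝ) : shannon t = -(∑ i, t i * log (t i)) / log 2 := by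
  simp only [shannon, logb, mul_div_assoc', sum_div, neg_div]

lemma shannon_lt_shannon_iff {t t' : Fin n → ℝ} :
    shannon t < shannon t' ↔ ∑ i, t' i * log (t' i) < ∑ i, t i * log (t i) := by
  rw [shannon_eq, shannon_eq, div_lt_div_iff_of_pos_right (log_pos one_lt_two), neg_lt_neg_iff]

lemma tvDist_uniform_eq_sum_max {q : Fin n → ℝ} (hq1 : ∑ i, q i = 1) :
    tvDist (fun _ => 1 / (n : ℝ)) q = ∑ i, max (1 / (n : ℝ) - q i) 0 ∧
      tvDist (fun _ => 1 / (n : ℝ)) q = ∑ i, max (q i - 1 / (n : ℝ)) 0 := by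
  have hn : (n : ℝ) ≠ 0 := Nat.cast_ne_zero.mpr (by rintro rfl; simp at hq1)
  have hsum : ∑ i, (1 / (n : ℝ) - q i) = 0 := by
    simp [sum_sub_distrib, hq1, hn]
  have hsum' : ∑ i, (q i - 1 / (n : ℝ)) = 0 := by
    rw [← neg_eq_zero, ← sum_neg_distrib, ← hsum]
    simp
  refine ⟨(sum_max_zero_eq_half_sum_abs hsum).symm, ?_⟩
  rw [sum_max_zero_eq_half_sum_abs hsum', tvDist]
  simp only [abs_sub_comm]

lemma exists_water_levels {q : Fin n → ℝ} (hq0 : ∀ i, 0 ≤ q i) (hq1 : ∑ i, q i = 1) {φ : ℝ}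
    (hφ0 : 0 ≤ φ) (hφcrit : φ ≤ tvDist (fun _ => 1 / (n : ℝ)) q) :
    ∃ τ₁ τ₂ : ℝ, 0 ≤ τ₁ ∧ τ₁ ≤ τ₂ ∧
      ∑ i, max (τ₁ - q i) 0 = φ ∧ ∑ i, max (q i - τ₂) 0 = φ := by
  obtain ⟨htv₁, htv₂⟩ := tvDist_uniform_eq_sum_max hq1
  have hn : 1 ≤ n := Nat.one_le_iff_ne_zero.mpr (by rintro rfl; simp at hq1)
  have hq_le : ∀ i, q i ≤ 1 := fun i =>
    hq1 ▸ single_le_sum (fun j _ => hq0 j) (mem_univ i)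
  obtain ⟨τ₁, ⟨hτ₁0, hτ₁u⟩, hg⟩ :=
    exists_sum_max_sub_eq (by positivity) hq0 ⟨hφ0, htv₁ ▸ hφcrit⟩
  obtain ⟨τ₂, ⟨hτ₂u, -⟩, hh⟩ := exists_sum_max_sub_eq' (b := 1)
    (div_le_one_of_le₀ (by exact_mod_cast hn) (by positivity)) hq_le ⟨hφ0, htv₂ ▸ hφcrit⟩
  exact ⟨τ₁, τ₂, hτ₁0, hτ₁u.trans hτ₂u, hg, hh⟩

lemma Attainable.sum_eq {q t : Fin n → ℝ} {φ : ℝ} (ht : Attainable q φ t) :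
    ∑ i, t i = ∑ i, q i := by
  obtain ⟨s, r, ⟨-, -, -, hs, hr⟩, rfl⟩ := ht
  simp only [sum_add_distrib, sum_sub_distrib, hs, hr, sub_add_cancel]

lemma Attainable.eq_of_zero {q t : Fin n → ℝ} (ht : Attainable q 0 t) : t = q := by
  obtain ⟨s, r, ⟨hs0, hr0, -, hs, hr⟩, rfl⟩ := ht
  have hs' := (sum_eq_zero_iff_of_nonneg fun i _ => hs0 i).mp hs
  have hr' := (sum_eq_zero_iff_of_nonneg fun i _ => hr0 i).mp hr
  funext i
  simp [hs' i (mem_univ i), hr' i (mem_univ i)]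

lemma attainable_clip {q : Fin n → ℝ} {τ₁ τ₂ φ : ℝ} (hτ₁ : 0 ≤ τ₁) (hτ : τ₁ ≤ τ₂)
    (hg : ∑ i, max (τ₁ - q i) 0 = φ) (hh : ∑ i, max (q i - τ₂) 0 = φ) :
    Attainable q φ (fun i => min (max (q i) τ₁) τ₂) := by
  have hclip : ∀ i, q i - max (q i - τ₂) 0 + max (τ₁ - q i) 0 = min (max (q i) τ₁) τ₂ :=
    fun i => by linarith [by simpa using sub_clip_mul hτ (fun _ => 1) (q i)]
  refine ⟨fun i => max (q i - τ₂) 0, fun i => max (τ₁ - q i) 0,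
    ⟨fun i => le_max_right _ _, fun i => le_max_right _ _, fun i => ?_, hh, hg⟩, ?_⟩
  · rw [hclip]
    exact hτ₁.trans (le_min (le_max_right _ _) hτ)
  · funext i
    exact (hclip i).symm

lemma Feasible.sum_sub_clip_mul_nonneg {q s r : Fin n → ℝ} {τ₁ τ₂ φ : ℝ} (h : Feasible q φ s r)
    (hτ : τ₁ ≤ τ₂) (hg : ∑ i, max (τ₁ - q i) 0 = φ) (hh : ∑ i, max (q i - τ₂) 0 = φ)
    {g : ℝ → ℝ} (hmono : MonotoneOn g (Set.Icc τ₁ τ₂)) :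
    0 ≤ ∑ i, (q i - s i + r i - min (max (q i) τ₁) τ₂) * g (min (max (q i) τ₁) τ₂) := by
  obtain ⟨hs0, hr0, -, hs, hr⟩ := h
  set y : Fin n → ℝ := fun i => min (max (q i) τ₁) τ₂
  have hy : ∀ i, y i ∈ Set.Icc τ₁ τ₂ := fun i => ⟨le_min (le_max_right _ _) hτ, min_le_right _ _⟩
  have hτ₁ : τ₁ ∈ Set.Icc τ₁ τ₂ := ⟨le_rfl, hτ⟩
  have hτ₂ : τ₂ ∈ Set.Icc τ₁ τ₂ := ⟨hτ, le_rfl⟩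
  have hr_ge : φ * g τ₁ ≤ ∑ i, r i * g (y i) := by
    rw [← hr, sum_mul]
    exact sum_le_sum fun i _ => mul_le_mul_of_nonneg_left (hmono hτ₁ (hy i) (hy i).1) (hr0 i)
  have hs_le : ∑ i, s i * g (y i) ≤ φ * g τ₂ := by
    rw [← hs, sum_mul]
    exact sum_le_sum fun i _ => mul_le_mul_of_nonneg_left (hmono (hy i) hτ₂ (hy i).2) (hs0 i)
  have hsplit : ∑ i, (q i - s i + r i - y i) * g (y i) =
      ∑ i, (q i - y i) * g (y i) + ∑ i, r i * g (y i) - ∑ i, s i * g (y i) := by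
    rw [← sum_add_distrib, ← sum_sub_distrib]
    exact sum_congr rfl fun i _ => by ring
  rw [hsplit, sum_sub_clip_mul hτ hg hh]
  linarith

lemma shannon_lt_of_attainable_ne {q t : Fin n → ℝ} (hq0 : ∀ i, 0 ≤ q i) {τ₁ τ₂ φ : ℝ}
    (hτ₁ : 0 ≤ τ₁) (hτ : τ₁ ≤ τ₂)
    (hg : ∑ i, max (τ₁ - q i) 0 = φ) (hh : ∑ i, max (q i - τ₂) 0 = φ)
    (ht : Attainable q φ t) (hne : t ≠ fun i => min (max (q i) τ₁) τ₂) :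
    shannon t < shannon (fun i => min (max (q i) τ₁) τ₂) := by
  have hclip := attainable_clip hτ₁ hτ hg hh
  rcases hτ₁.eq_or_lt with rfl | hτ₁
  · have hφ : φ = 0 := by
      rw [← hg]
      exact sum_eq_zero fun i _ => max_eq_right (by linarith [hq0 i])
    subst hφ
    exact absurd (ht.eq_of_zero.trans hclip.eq_of_zero.symm) hne
  obtain ⟨s, r, hsr, rfl⟩ := ht
  refine shannon_lt_shannon_iff.mpr (sum_mul_log_lt_of_ne hsr.2.2.1
    (fun i => hτ₁.trans_le (le_min (le_max_right _ _) hτ)) ?_ ?_ hne)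
  · rw [Attainable.sum_eq ⟨s, r, hsr, rfl⟩, sum_clip hτ hg hh]
  · exact hsr.sum_sub_clip_mul_nonneg hτ hg hh
      (strictMonoOn_log.monotoneOn.mono fun x hx => hτ₁.trans_le hx.1)

end Profiles

theorem water_filling_optimal_profile_general {n : ℕ}
    (q : Fin n → ℝ) (hq0 : ∀ i, 0 ≤ q i) (hq1 : ∑ i, q i = 1)
    (φ : ℝ) (hφ0 : 0 ≤ φ) (hφcrit : φ ≤ tvDist (fun _ => 1 / (n : ℝ)) q) :
    ∃ τ₁ τ₂ : ℝ, τ₁ ≤ τ₂ ∧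
      (∑ i, max (τ₁ - q i) 0 = φ) ∧
      (∑ i, max (q i - τ₂) 0 = φ) ∧
      Attainable q φ (fun i => min (max (q i) τ₁) τ₂) ∧
      (∀ t : Fin n → ℝ, Attainable q φ t →
        shannon t ≤ shannon (fun i => min (max (q i) τ₁) τ₂)) ∧
      (∀ t : Fin n → ℝ, Attainable q φ t →
        shannon t = shannon (fun i => min (max (q i) τ₁) τ₂) →
        t = fun i => min (max (q i) τ₁) τ₂) := by
  obtain ⟨τ₁, τ₂, hτ₁, hτ, hg, hh⟩ := exists_water_levels hq0 hq1 hφ0 hφcrit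
  have hlt := fun t (ht : Attainable q φ t) => shannon_lt_of_attainable_ne hq0 hτ₁ hτ hg hh ht
  refine ⟨τ₁, τ₂, hτ, hg, hh, attainable_clip hτ₁ hτ hg hh, fun t ht => ?_, fun t ht heq => ?_⟩
  · rcases eq_or_ne t (fun i => min (max (q i) τ₁) τ₂) with rfl | hne
    · exact le_rfl
    · exact (hlt t ht hne).le
  · by_contra hne
    exact (hlt t ht hne).ne heq

theorem water_filling_optimal_profile {n : ℕ} (hn : 2 ≤ n)
    (q : Fin n → ℝ) (hq0 : ∀ i, 0 ≤ q i) (hq1 : ∑ i, q i = 1)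
    (φ : ℝ) (hφ0 : 0 ≤ φ) (hφcrit : φ ≤ tvDist (fun _ => 1 / (n : ℝ)) q)
    (hφ1 : φ < 1) :
    ∃ τ₁ τ₂ : ℝ, τ₁ ≤ τ₂ ∧
      (∑ i, max (τ₁ - q i) 0 = φ) ∧
      (∑ i, max (q i - τ₂) 0 = φ) ∧
      Attainable q φ (fun i => min (max (q i) τ₁) τ₂) ∧
      (∀ t : Fin n → ℝ, Attainable q φ t →
        shannon t ≤ shannon (fun i => min (max (q i) τ₁) τ₂)) ∧
      (∀ t : Fin n → ℝ, Attainable q φ t →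
        shannon t = shannon (fun i => min (max (q i) τ₁) τ₂) →
        t = fun i => min (max (q i) τ₁) τ₂) :=
  water_filling_optimal_profile_general q hq0 hq1 φ hφ0 hφcrit
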